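/- Let p > 0 with 2/p ∈ ℕ, ω ≥ 0, and φ ∈ [0,2π). The series defining 𝒥_{ω,φ}^{[p]}(r) := ((2/p)²/Γ(1/p)²)·Σ_{k=0}^∞ [p^{2k}(−1)^k/Γ((2/p)(k+1)+ω)]·(r/p)^{2k+ω}·Σ_{|m|'=k} [Γ((2m+1)/p)/(2m)!]·|cos^{m₁}φ sin^{m₂}φ|^{4/p} converges uniformly on every compact subset of ℝ_{≥0}, with |partial sums| dominated by (4C(ω)r^ω/(p^{ω+2}Γ(2/p)))·exp(r(|cos φ|^{2/p}+|sin φ|^{2/p})). -/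

import Mathlib

open Filter

/-- The constant `C(ω)`: `1/(ωΓ(ω))` for `ω > 0` and `1` for `ω = 0`. -/
noncomputable def Cconst (ω : ℝ) : ℝ := if ω = 0 then 1 else 1 / (ω * Real.Gamma ω)

/-- The `k`-th term of the series defining `𝒥_{ω,φ}^{[p]}(r)`. -/
noncomputable def calJterm (p ω φ : ℝ) (k : ℕ) (r : ℝ) : ℝ :=
  ((2 / p) ^ 2 / Real.Gamma (1 / p) ^ 2) *
    ((p ^ (2 * k) * (-1 : ℝ) ^ k / Real.Gamma ((2 / p) * ((k : ℝ) + 1) + ω)) *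
      (r / p) ^ (2 * (k : ℝ) + ω) *
      ∑ n ∈ Finset.range (k + 1),
        Real.Gamma ((2 * (n : ℝ) + 1) / p) * Real.Gamma ((2 * ((k - n : ℕ) : ℝ) + 1) / p) /
            ((Nat.factorial (2 * n) : ℝ) * (Nat.factorial (2 * (k - n)) : ℝ)) *
          (|Real.cos φ| ^ (n : ℕ) * |Real.sin φ| ^ (k - n)) ^ (4 / p))

/-!
Log-convexity of `Γ` makes its increments `Γ(x + d) / Γ(x)` increasing in `x`. This gives
`Γ(x) Γ(y) / Γ(x + y) ≤ Γ(s)² / Γ(2s)` for `x, y ≥ s`, and `Γ(X) Γ(1 + ω) ≤ Γ(X + ω)` for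
`X ≥ 1`; the latter applies to `X = (2/p)(k + 1)` because `2/p` is a positive integer. With
`1 / ((2m)! (2(k - m))!) = C(2k, 2m) / (2k)!` and the even half of the binomial expansion, the
`k`-th term is bounded by `4 C(ω) r^ω / (p^(ω+2) Γ(2/p)) · (rσ)^(2k) / (2k)!`, where
`σ = |cos φ|^(2/p) + |sin φ|^(2/p)`. These majorants add up to a multiple of
`cosh (rσ) ≤ exp (rσ)` and increase with `r`, so the Weierstrass M-test applies on compacts.
-/

open Real Finset

theorem ConvexOn.map_add_add_map_le {s : Set ℝ} {f : ℝ → ℝ} (hf : ConvexOn ℝ s f)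
    {u x d : ℝ} (hu : u ∈ s) (hxd : x + d ∈ s) (hux : u ≤ x) (hd : 0 ≤ d) :
    f (u + d) + f x ≤ f u + f (x + d) := by
  rcases hd.eq_or_lt with rfl | hd
  · simp
  have hden : 0 < x - u + d := by linarith
  set t := d / (x - u + d)
  have ht0 : 0 ≤ t := by positivity
  have ht1 : t ≤ 1 := (div_le_one hden).2 (by linarith)
  -- `u + d` and `x` are the convex combinations of `u` and `x + d` with swapped weights
  have h1 := hf.2 hu hxd (sub_nonneg.2 ht1) ht0 (sub_add_cancel 1 t)
  have h2 := hf.2 hu hxd ht0 (sub_nonneg.2 ht1) (add_sub_cancel t 1)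
  have e1 : (1 - t) • u + t • (x + d) = u + d := by
    simp only [t, smul_eq_mul]; field_simp; ring
  have e2 : t • u + (1 - t) • (x + d) = x := by
    simp only [t, smul_eq_mul]; field_simp; ring
  rw [e1] at h1
  rw [e2] at h2
  simp only [smul_eq_mul] at h1 h2
  linarith

namespace Real

theorem Gamma_add_mul_Gamma_le_Gamma_mul_Gamma_add {u x d : ℝ} (hu : 0 < u) (hux : u ≤ x)
    (hd : 0 ≤ d) : Gamma (u + d) * Gamma x ≤ Gamma u * Gamma (x + d) := by
  have hx : 0 < x := hu.trans_le hux
  have hlog := convexOn_log_Gamma.map_add_add_map_le hu (show 0 < x + d by linarith) hux hd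
  simp only [Function.comp_apply] at hlog
  rwa [← log_le_log_iff (by positivity) (by positivity), log_mul (by positivity) (by positivity),
    log_mul (by positivity) (by positivity)]

theorem Gamma_div_Gamma_add_le {x ω : ℝ} (hx : 1 ≤ x) (hω : 0 ≤ ω) :
    Gamma x / Gamma (x + ω) ≤ (Gamma (ω + 1))⁻¹ := by
  have h := Gamma_add_mul_Gamma_le_Gamma_mul_Gamma_add one_pos hx hω
  rw [Gamma_one, one_mul] at h
  rw [div_le_iff₀ (Gamma_pos_of_pos (by linarith)), ← div_eq_inv_mul,
    le_div_iff₀ (Gamma_pos_of_pos (by linarith)), add_comm ω, mul_comm]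
  exact h

theorem Gamma_mul_Gamma_mul_Gamma_two_mul_le {s x y : ℝ} (hs : 0 < s) (hx : s ≤ x)
    (hy : s ≤ y) : Gamma x * Gamma y * Gamma (2 * s) ≤ Gamma s ^ 2 * Gamma (x + y) := by
  have hxy := Gamma_add_mul_Gamma_le_Gamma_mul_Gamma_add hs hx (hs.le.trans hy)
  have hsy := Gamma_add_mul_Gamma_le_Gamma_mul_Gamma_add hs hy hs.le
  have := Gamma_pos_of_pos (hs.trans_le hx)
  calc Gamma x * Gamma y * Gamma (2 * s) = Gamma x * (Gamma (s + s) * Gamma y) := by ring_nf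
    _ ≤ Gamma x * (Gamma s * Gamma (s + y)) := by rw [add_comm y s] at hsy; gcongr
    _ = Gamma s * (Gamma (s + y) * Gamma x) := by ring
    _ ≤ Gamma s * (Gamma s * Gamma (x + y)) := by gcongr
    _ = Gamma s ^ 2 * Gamma (x + y) := by ring

theorem sum_range_even_div_factorial_le_exp {x : ℝ} (hx : 0 ≤ x) (N : ℕ) :
    ∑ k ∈ range N, x ^ (2 * k) / (2 * k).factorial ≤ exp x :=
  calc ∑ k ∈ range N, x ^ (2 * k) / (2 * k).factorial
      ≤ cosh x := sum_le_hasSum _ (fun k _ => by positivity) (hasSum_cosh x)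
    _ ≤ exp x := by
      rw [← cosh_add_sinh x]
      exact le_add_of_nonneg_right (sinh_nonneg_iff.2 hx)

theorem pow_rpow_two_mul {c : ℝ} (hc : 0 ≤ c) (n : ℕ) (t : ℝ) :
    (c ^ n) ^ (2 * t) = (c ^ t) ^ (2 * n) := by
  rw [← rpow_natCast c n, ← rpow_natCast (c ^ t) (2 * n), ← rpow_mul hc, ← rpow_mul hc]
  push_cast
  ring_nf

end Real

theorem sum_range_choose_two_mul_mul_pow_le {a b : ℝ} (ha : 0 ≤ a) (hb : 0 ≤ b) (k : ℕ) :
    ∑ n ∈ range (k + 1), ((2 * k).choose (2 * n) : ℝ) * (a ^ (2 * n) * b ^ (2 * (k - n)))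
      ≤ (a + b) ^ (2 * k) :=
  calc ∑ n ∈ range (k + 1), ((2 * k).choose (2 * n) : ℝ) * (a ^ (2 * n) * b ^ (2 * (k - n)))
      = ∑ j ∈ (range (k + 1)).image (2 * ·),
          a ^ j * b ^ (2 * k - j) * ((2 * k).choose j : ℝ) := by
        rw [sum_image (by intro x _ y _ h; simp only at h; omega)]
        refine sum_congr rfl fun n _ => ?_
        rw [show 2 * (k - n) = 2 * k - 2 * n by omega]
        ring
    _ ≤ ∑ j ∈ range (2 * k + 1), a ^ j * b ^ (2 * k - j) * ((2 * k).choose j : ℝ) := by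
        refine sum_le_sum_of_subset_of_nonneg (fun j hj => ?_) (fun j _ _ => by positivity)
        simp only [mem_image, mem_range] at hj ⊢
        omega
    _ = (a + b) ^ (2 * k) := (add_pow a b _).symm

theorem Cconst_eq_inv_Gamma (ω : ℝ) : Cconst ω = (Gamma (ω + 1))⁻¹ := by
  unfold Cconst
  split_ifs with h
  · simp [h]
  · rw [Gamma_add_one h, one_div]

theorem Cconst_pos {ω : ℝ} (hω : -1 < ω) : 0 < Cconst ω := by
  rw [Cconst_eq_inv_Gamma]
  exact inv_pos.2 (Gamma_pos_of_pos (by linarith))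

theorem Gamma_odd_div_mul_Gamma_odd_div_le {p : ℝ} (hp : 0 < p) (n m : ℕ) :
    Gamma ((2 * (n : ℝ) + 1) / p) * Gamma ((2 * (m : ℝ) + 1) / p)
      ≤ Gamma (1 / p) ^ 2 * Gamma (2 / p * ((n + m : ℕ) + 1)) / Gamma (2 / p) := by
  have hle : ∀ j : ℕ, 1 / p ≤ (2 * (j : ℝ) + 1) / p := fun j => by
    gcongr
    linarith [Nat.cast_nonneg (α := ℝ) j]
  have h := Gamma_mul_Gamma_mul_Gamma_two_mul_le (by positivity) (hle n) (hle m)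
  have hsum : (2 * (n : ℝ) + 1) / p + (2 * (m : ℝ) + 1) / p = 2 / p * ((n + m : ℕ) + 1) := by
    push_cast
    ring
  rwa [hsum, show 2 * (1 / p) = 2 / p by ring,
    ← le_div_iff₀ (Gamma_pos_of_pos (by positivity))] at h

theorem sum_Gamma_odd_div_mul_rpow_le {p c s : ℝ} (hp : 0 < p) (hc : 0 ≤ c) (hs : 0 ≤ s)
    (k : ℕ) :
    ∑ n ∈ range (k + 1),
        Gamma ((2 * (n : ℝ) + 1) / p) * Gamma ((2 * ((k - n : ℕ) : ℝ) + 1) / p) /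
            (((2 * n).factorial : ℝ) * ((2 * (k - n)).factorial : ℝ)) *
          (c ^ n * s ^ (k - n)) ^ (4 / p)
      ≤ Gamma (1 / p) ^ 2 * Gamma (2 / p * ((k : ℝ) + 1)) / Gamma (2 / p) *
          ((c ^ (2 / p) + s ^ (2 / p)) ^ (2 * k) / (2 * k).factorial) := by
  set G := Gamma (1 / p) ^ 2 * Gamma (2 / p * ((k : ℝ) + 1)) / Gamma (2 / p)
  have hterm : ∀ n ∈ range (k + 1),
      Gamma ((2 * (n : ℝ) + 1) / p) * Gamma ((2 * ((k - n : ℕ) : ℝ) + 1) / p) /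
            (((2 * n).factorial : ℝ) * ((2 * (k - n)).factorial : ℝ)) *
          (c ^ n * s ^ (k - n)) ^ (4 / p)
        ≤ G / (2 * k).factorial * (((2 * k).choose (2 * n) : ℝ) *
            ((c ^ (2 / p)) ^ (2 * n) * (s ^ (2 / p)) ^ (2 * (k - n)))) := by
    intro n hn
    have hnk : n + (k - n) = k := Nat.add_sub_cancel' (Nat.lt_succ_iff.1 (mem_range.1 hn))
    have hfact : ((2 * k).choose (2 * n) : ℝ) * (2 * n).factorial * (2 * (k - n)).factorial
        = (2 * k).factorial := by
      have := Nat.add_choose_mul_factorial_mul_factorial (2 * (k - n)) (2 * n)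
      rw [show 2 * (k - n) + 2 * n = 2 * k by omega] at this
      exact_mod_cast (mul_right_comm _ _ _).trans this
    have hchoose : ((2 * k).choose (2 * n) : ℝ) ≠ 0 := by
      exact_mod_cast (Nat.choose_pos (by omega)).ne'
    have hGamma := Gamma_odd_div_mul_Gamma_odd_div_le hp n (k - n)
    rw [hnk] at hGamma
    rw [mul_rpow (by positivity) (by positivity), show 4 / p = 2 * (2 / p) by ring,
      pow_rpow_two_mul hc, pow_rpow_two_mul hs, ← hfact]
    calc _ ≤ G / ((2 * n).factorial * (2 * (k - n)).factorial) *
          ((c ^ (2 / p)) ^ (2 * n) * (s ^ (2 / p)) ^ (2 * (k - n))) := by gcongr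
      _ = _ := by field_simp
  calc _ ≤ _ := sum_le_sum hterm
    _ = G / (2 * k).factorial * ∑ n ∈ range (k + 1), ((2 * k).choose (2 * n) : ℝ) *
          ((c ^ (2 / p)) ^ (2 * n) * (s ^ (2 / p)) ^ (2 * (k - n))) := (mul_sum _ _ _).symm
    _ ≤ G / (2 * k).factorial * (c ^ (2 / p) + s ^ (2 / p)) ^ (2 * k) := by
      gcongr
      exact sum_range_choose_two_mul_mul_pow_le (by positivity) (by positivity) k
    _ = _ := by ring

theorem abs_calJterm_le {p ω : ℝ} (φ : ℝ) (hp : 0 < p) (hp1 : 1 ≤ 2 / p) (hω : 0 ≤ ω)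
    (k : ℕ) {r : ℝ} (hr : 0 ≤ r) :
    |calJterm p ω φ k r| ≤ 4 * Cconst ω * r ^ ω / (p ^ (ω + 2) * Gamma (2 / p)) *
      ((r * (|cos φ| ^ (2 / p) + |sin φ| ^ (2 / p))) ^ (2 * k) / (2 * k).factorial) := by
  set X := 2 / p * ((k : ℝ) + 1)
  have hX : 1 ≤ X := by nlinarith [Nat.cast_nonneg (α := ℝ) k]
  set S := ∑ n ∈ range (k + 1),
    Gamma ((2 * (n : ℝ) + 1) / p) * Gamma ((2 * ((k - n : ℕ) : ℝ) + 1) / p) /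
      (((2 * n).factorial : ℝ) * ((2 * (k - n)).factorial : ℝ)) *
        (|cos φ| ^ n * |sin φ| ^ (k - n)) ^ (4 / p)
  have hS := sum_Gamma_odd_div_mul_rpow_le hp (abs_nonneg (cos φ)) (abs_nonneg (sin φ)) k
  have hS0 : 0 ≤ S := sum_nonneg fun n _ => by positivity
  have hcalJ : calJterm p ω φ k r = (-1) ^ k * ((2 / p) ^ 2 / Gamma (1 / p) ^ 2 *
      (p ^ (2 * k) / Gamma (X + ω) * ((r / p) ^ ω * (r / p) ^ (2 * k)) * S)) := by
    rw [calJterm, rpow_add_of_nonneg (by positivity) (by positivity) hω,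
      show 2 * (k : ℝ) = (2 * k : ℕ) by push_cast; ring, rpow_natCast]
    ring
  have habs : |calJterm p ω φ k r| = (2 / p) ^ 2 / Gamma (1 / p) ^ 2 *
      (p ^ (2 * k) / Gamma (X + ω) * ((r / p) ^ ω * (r / p) ^ (2 * k)) * S) := by
    rw [hcalJ, abs_mul, abs_pow, abs_neg, abs_one, one_pow, one_mul,
      abs_of_nonneg (mul_nonneg (by positivity) (mul_nonneg (by positivity) hS0))]
  calc |calJterm p ω φ k r|
      ≤ (2 / p) ^ 2 / Gamma (1 / p) ^ 2 * (p ^ (2 * k) / Gamma (X + ω) *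
          ((r / p) ^ ω * (r / p) ^ (2 * k)) * (Gamma (1 / p) ^ 2 * Gamma X / Gamma (2 / p) *
            ((|cos φ| ^ (2 / p) + |sin φ| ^ (2 / p)) ^ (2 * k) / (2 * k).factorial))) := by
        rw [habs]; gcongr
    _ = (2 / p) ^ 2 * (r / p) ^ ω / Gamma (2 / p) * (Gamma X / Gamma (X + ω)) *
          ((r * (|cos φ| ^ (2 / p) + |sin φ| ^ (2 / p))) ^ (2 * k) / (2 * k).factorial) := by
        rw [div_pow r p (2 * k), mul_pow r _ (2 * k)]
        field_simp
    _ ≤ (2 / p) ^ 2 * (r / p) ^ ω / Gamma (2 / p) * (Gamma (ω + 1))⁻¹ *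
          ((r * (|cos φ| ^ (2 / p) + |sin φ| ^ (2 / p))) ^ (2 * k) / (2 * k).factorial) := by
        gcongr
        exact Gamma_div_Gamma_add_le hX hω
    _ = _ := by
        rw [Cconst_eq_inv_Gamma, div_rpow hr hp.le, rpow_add hp, rpow_two]
        field_simp
        ring

theorem calJ_series_compact_uniform_convergence_general (p ω φ : ℝ) (hp : 0 < p)
    (hq : ∃ q : ℕ, (q : ℝ) = 2 / p) (hω : 0 ≤ ω) :
    (∀ K ⊆ Set.Ici (0 : ℝ), IsCompact K →
      TendstoUniformlyOn (fun N r => ∑ k ∈ Finset.range N, calJterm p ω φ k r)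
        (fun r => ∑' k : ℕ, calJterm p ω φ k r) atTop K) ∧
    ∀ r : ℝ, 0 ≤ r → ∀ N : ℕ,
      |∑ k ∈ Finset.range N, calJterm p ω φ k r|
        ≤ 4 * Cconst ω * r ^ ω / (p ^ (ω + 2) * Real.Gamma (2 / p)) *
            Real.exp (r * (|Real.cos φ| ^ (2 / p) + |Real.sin φ| ^ (2 / p))) := by
  have hp1 : 1 ≤ 2 / p := by
    obtain ⟨q, hq⟩ := hq
    have hq0 : (0 : ℝ) < q := hq ▸ by positivity
    rw [← hq]
    exact_mod_cast hq0
  have hC := Cconst_pos (by linarith : -1 < ω)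
  set σ := |cos φ| ^ (2 / p) + |sin φ| ^ (2 / p)
  refine ⟨fun K hK hKc => ?_, fun r hr N => ?_⟩
  · obtain ⟨R, hR⟩ := hKc.bddAbove
    refine tendstoUniformlyOn_tsum_nat ((hasSum_cosh (R * σ)).summable.mul_left
      (4 * Cconst ω * R ^ ω / (p ^ (ω + 2) * Gamma (2 / p))))
      fun k r hr => (abs_calJterm_le φ hp hp1 hω k (hK hr)).trans ?_
    have hr0 : 0 ≤ r := hK hr
    have hrR : r ≤ R := hR hr
    have hR0 : 0 ≤ R := hr0.trans hrR
    gcongr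
  · calc |∑ k ∈ range N, calJterm p ω φ k r|
        ≤ ∑ k ∈ range N, 4 * Cconst ω * r ^ ω / (p ^ (ω + 2) * Gamma (2 / p)) *
            ((r * σ) ^ (2 * k) / (2 * k).factorial) :=
          (abs_sum_le_sum_abs _ _).trans (sum_le_sum fun k _ => abs_calJterm_le φ hp hp1 hω k hr)
      _ ≤ _ := by
          rw [← mul_sum]
          gcongr
          exact sum_range_even_div_factorial_le_exp (by positivity) N

theorem calJ_series_compact_uniform_convergence (p ω φ : ℝ) (hp : 0 < p)
    (hq : ∃ q : ℕ, (q : ℝ) = 2 / p) (hω : 0 ≤ ω) (hφ : φ ∈ Set.Ico 0 (2 * Real.pi)) :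
    (∀ K ⊆ Set.Ici (0 : ℝ), IsCompact K →
      TendstoUniformlyOn (fun N r => ∑ k ∈ Finset.range N, calJterm p ω φ k r)
        (fun r => ∑' k : ℕ, calJterm p ω φ k r) atTop K) ∧
    ∀ r : ℝ, 0 ≤ r → ∀ N : ℕ,
      |∑ k ∈ Finset.range N, calJterm p ω φ k r|
        ≤ 4 * Cconst ω * r ^ ω / (p ^ (ω + 2) * Real.Gamma (2 / p)) *
            Real.exp (r * (|Real.cos φ| ^ (2 / p) + |Real.sin φ| ^ (2 / p))) :=
  calJ_series_compact_uniform_convergence_general p ω φ hp hq hω
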